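/- arXiv:1706.03267 — 5 statements merged into one kernel-verified Lean document; each statement's English description precedes it below -/
import Mathlib

section
/- Suppose (μ*, Σ*) is the unique maximizer of the Gaussian log-likelihood L(μ, Σ) over ℝ^d × {symmetric positive definite d×d matrices}, and S* is a maximizer of the reformulated log-likelihood L̂(S) over the symmetric positive definite (d+1)×(d+1) matrices. Then L̂(S*) = L(μ*, Σ*) and S* is the block matrix [[Σ* + μ*μ*ᵀ, μ*], [μ*ᵀ, 1]]. -/
open Matrix Real

noncomputable def pN {d : ℕ} (x μ : Fin d → ℝ) (C : Matrix (Fin d) (Fin d) ℝ) : ℝ :=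
  C.det ^ (-(1:ℝ)/2) * (2 * Real.pi) ^ (-(d:ℝ)/2) *
    Real.exp (-(1/2) * ((x - μ) ⬝ᵥ (C⁻¹ *ᵥ (x - μ))))

noncomputable def qN {d : ℕ} (y : Fin (d+1) → ℝ) (S : Matrix (Fin (d+1)) (Fin (d+1)) ℝ) : ℝ :=
  (2 * Real.pi * Real.exp 1) ^ ((1:ℝ)/2) * S.det ^ (-(1:ℝ)/2) *
    (2 * Real.pi) ^ (-((d:ℝ)+1)/2) * Real.exp (-(1/2) * (y ⬝ᵥ (S⁻¹ *ᵥ y)))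

def liftPt {d : ℕ} (x : Fin d → ℝ) : Fin (d+1) → ℝ := Fin.snoc x 1

noncomputable def Lgauss {d n : ℕ} (x : Fin n → Fin d → ℝ) (μ : Fin d → ℝ)
    (C : Matrix (Fin d) (Fin d) ℝ) : ℝ := ∑ i, Real.log (pN (x i) μ C)

noncomputable def Lhat {d n : ℕ} (x : Fin n → Fin d → ℝ)
    (S : Matrix (Fin (d+1)) (Fin (d+1)) ℝ) : ℝ := ∑ i, Real.log (qN (liftPt (x i)) S)

def Sblk {d : ℕ} (U : Matrix (Fin d) (Fin d) ℝ) (t : Fin d → ℝ) (s : ℝ) :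
    Matrix (Fin (d+1)) (Fin (d+1)) ℝ :=
  Matrix.of (Fin.snoc
    (fun i : Fin d => Fin.snoc (fun j : Fin d => U i j + s * t i * t j) (s * t i))
    (Fin.snoc (fun j : Fin d => s * t j) s))

/-!
Write a positive definite `S` of size `d + 1` as `Sblk U t s` with `s > 0` its corner entry and
`U` the Schur complement of that entry, which is again positive definite. Since
`Sblk U t s * snoc (U⁻¹ (x - t)) (s⁻¹ - t ⬝ᵥ U⁻¹ (x - t)) = liftPt x` and `det (Sblk U t s) = s det U`,
the reformulated likelihood splits as `L̂(Sblk U t s) = L(t, U) - n (log s + s⁻¹ - 1) / 2`.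
The penalty is nonnegative and vanishes only at `s = 1`, so `L̂ ≤ L(μ*, Σ*)` with equality at
`Sblk Σ* μ* 1`; a maximizer of `L̂` therefore has `s = 1` and `(t, U)` maximizing `L`, that is
`(t, U) = (μ*, Σ*)`.
-/

namespace Matrix

section Bordered

variable {R : Type*} {d : ℕ}

def bordered (M : Matrix (Fin d) (Fin d) R) (b c : Fin d → R) (r : R) :
    Matrix (Fin (d+1)) (Fin (d+1)) R :=
  of (Fin.snoc (fun i => Fin.snoc (M i) (b i)) (Fin.snoc c r))

variable {M M' : Matrix (Fin d) (Fin d) R} {b c b' c' : Fin d → R} {r r' : R}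

@[simp] lemma bordered_castSucc_castSucc (i j : Fin d) :
    bordered M b c r i.castSucc j.castSucc = M i j := by
  simp [bordered]

@[simp] lemma bordered_castSucc_last (i : Fin d) :
    bordered M b c r i.castSucc (Fin.last d) = b i := by
  simp [bordered]

@[simp] lemma bordered_last_castSucc (j : Fin d) :
    bordered M b c r (Fin.last d) j.castSucc = c j := by
  simp [bordered]

@[simp] lemma bordered_last_last : bordered M b c r (Fin.last d) (Fin.last d) = r := by
  simp [bordered]

lemma transpose_bordered : (bordered M b c r)ᵀ = bordered Mᵀ c b r := by
  ext i j
  refine Fin.lastCases ?_ (fun i => ?_) i <;> refine Fin.lastCases ?_ (fun j => ?_) j <;> simp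

variable [CommRing R]

lemma bordered_mul_bordered :
    bordered M b c r * bordered M' b' c' r' =
      bordered (M * M' + vecMulVec b c') (M *ᵥ b' + r' • b) (c ᵥ* M' + r • c')
        (c ⬝ᵥ b' + r * r') := by
  ext i j
  rw [mul_apply, Fin.sum_univ_castSucc]
  refine Fin.lastCases ?_ (fun i => ?_) i <;> refine Fin.lastCases ?_ (fun j => ?_) j <;>
    simp [mul_apply, mulVec, vecMul, dotProduct, vecMulVec, mul_comm]

lemma bordered_mulVec_snoc (v : Fin d → R) (e : R) :
    bordered M b c r *ᵥ Fin.snoc v e = Fin.snoc (M *ᵥ v + e • b) (c ⬝ᵥ v + r * e) := by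
  ext i
  refine Fin.lastCases ?_ (fun i => ?_) i <;>
    simp [mulVec, dotProduct, Fin.sum_univ_castSucc, mul_comm]

lemma det_bordered_zero_row (M : Matrix (Fin d) (Fin d) R) (b : Fin d → R) (r : R) :
    (bordered M b 0 r).det = r * M.det := by
  rw [det_succ_row _ (Fin.last d), Fin.sum_univ_castSucc]
  have hminor : (bordered M b 0 r).submatrix Fin.castSucc Fin.castSucc = M := by
    ext i j
    simp
  simp [hminor]

lemma snoc_dotProduct_snoc (v w : Fin d → R) (e f : R) :
    (Fin.snoc v e : Fin (d+1) → R) ⬝ᵥ Fin.snoc w f = v ⬝ᵥ w + e * f := by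
  simp [dotProduct, Fin.sum_univ_castSucc]

end Bordered

end Matrix

section Sblk

variable {d : ℕ} {U : Matrix (Fin d) (Fin d) ℝ} {t : Fin d → ℝ} {s : ℝ}

lemma sblk_eq_bordered : Sblk U t s = bordered (U + s • vecMulVec t t) (s • t) (s • t) s := by
  ext i j
  refine Fin.lastCases ?_ (fun i => ?_) i <;> refine Fin.lastCases ?_ (fun j => ?_) j <;>
    simp [Sblk, vecMulVec, mul_assoc]

lemma sblk_mulVec_snoc (v : Fin d → ℝ) (e : ℝ) :
    Sblk U t s *ᵥ Fin.snoc v e =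
      Fin.snoc (U *ᵥ v + (s * (t ⬝ᵥ v + e)) • t) (s * (t ⬝ᵥ v + e)) := by
  rw [sblk_eq_bordered, bordered_mulVec_snoc, add_mulVec, smul_mulVec, vecMulVec_mulVec]
  congr 1
  · ext i; simp; ring
  · simp; ring

lemma snoc_dotProduct_sblk_mulVec_snoc (v : Fin d → ℝ) (e : ℝ) :
    (Fin.snoc v e : Fin (d+1) → ℝ) ⬝ᵥ (Sblk U t s *ᵥ Fin.snoc v e) =
      v ⬝ᵥ (U *ᵥ v) + s * (t ⬝ᵥ v + e) ^ 2 := by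
  rw [sblk_mulVec_snoc, snoc_dotProduct_snoc, dotProduct_add, dotProduct_smul,
    dotProduct_comm v t, smul_eq_mul]
  ring

lemma det_sblk : (Sblk U t s).det = s * U.det := by
  have hfactor : Sblk U t s = bordered U (s • t) 0 s * (bordered 1 t 0 1)ᵀ := by
    rw [transpose_bordered, bordered_mul_bordered, sblk_eq_bordered, smul_vecMulVec]
    simp
  rw [hfactor, det_mul, det_transpose, det_bordered_zero_row, det_bordered_zero_row]
  simp

lemma isHermitian_sblk (hU : U.IsHermitian) : (Sblk U t s).IsHermitian := by
  have hsymm (i j : Fin d) : U j i = U i j := by simpa using hU.apply i j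
  ext i j
  refine Fin.lastCases ?_ (fun i => ?_) i <;> refine Fin.lastCases ?_ (fun j => ?_) j <;>
    simp [Sblk, hsymm, mul_right_comm]

lemma posDef_sblk (hU : U.PosDef) (hs : 0 < s) : (Sblk U t s).PosDef := by
  refine posDef_iff_dotProduct_mulVec.mpr ⟨isHermitian_sblk hU.isHermitian, fun y hy => ?_⟩
  rw [star_trivial, ← Fin.snoc_init_self y, snoc_dotProduct_sblk_mulVec_snoc]
  by_cases hv : Fin.init y = 0
  · have he : y (Fin.last d) ≠ 0 := fun he =>
      hy (funext (Fin.lastCases he fun i => congrFun hv i))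
    simp [hv]
    positivity
  · have hquad := hU.dotProduct_mulVec_pos hv
    rw [star_trivial] at hquad
    positivity

lemma posDef_sblk_iff : (Sblk U t s).PosDef ↔ U.PosDef ∧ 0 < s := by
  refine ⟨fun h => ?_, fun ⟨hU, hs⟩ => posDef_sblk hU hs⟩
  have hquad {y : Fin (d+1) → ℝ} (hy : y ≠ 0) : 0 < y ⬝ᵥ (Sblk U t s *ᵥ y) := by
    simpa using h.dotProduct_mulVec_pos hy
  have hherm : U.IsHermitian := by
    ext i j
    have hij := h.isHermitian.apply i.castSucc j.castSucc
    simp only [Sblk, of_apply, Fin.snoc_castSucc, star_trivial] at hij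
    simp only [conjTranspose_apply, star_trivial]
    linarith
  refine ⟨posDef_iff_dotProduct_mulVec.mpr ⟨hherm, fun v hv => ?_⟩, ?_⟩
  · have hy : (Fin.snoc v (-(t ⬝ᵥ v)) : Fin (d+1) → ℝ) ≠ 0 := fun h0 =>
      hv (funext fun i => by simpa using congrFun h0 i.castSucc)
    simpa [snoc_dotProduct_sblk_mulVec_snoc] using hquad hy
  · have hy : (Fin.snoc 0 1 : Fin (d+1) → ℝ) ≠ 0 := fun h0 => by
      simpa using congrFun h0 (Fin.last d)
    simpa [snoc_dotProduct_sblk_mulVec_snoc] using hquad hy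

lemma exists_eq_sblk_of_isHermitian {S : Matrix (Fin (d+1)) (Fin (d+1)) ℝ} (hS : S.IsHermitian)
    (hs : S (Fin.last d) (Fin.last d) ≠ 0) :
    ∃ U t, S = Sblk U t (S (Fin.last d) (Fin.last d)) := by
  set s := S (Fin.last d) (Fin.last d)
  have hsymm (i j : Fin (d+1)) : S j i = S i j := by simpa using hS.apply i j
  set t : Fin d → ℝ := fun i => S i.castSucc (Fin.last d) / s with ht
  refine ⟨of fun i j => S i.castSucc j.castSucc - s * t i * t j, t, ?_⟩
  ext i j
  refine Fin.lastCases (Fin.lastCases ?_ (fun j => ?_) j)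
    (fun i => Fin.lastCases ?_ (fun j => ?_) j) i
  · simp [Sblk, s]
  · simp [Sblk, ht, hsymm j.castSucc, mul_div_cancel₀ _ hs]
  · simp [Sblk, ht, mul_div_cancel₀ _ hs]
  · simp [Sblk]

lemma exists_eq_sblk_of_posDef {S : Matrix (Fin (d+1)) (Fin (d+1)) ℝ} (hS : S.PosDef) :
    ∃ U t s, U.PosDef ∧ 0 < s ∧ S = Sblk U t s := by
  have hs : 0 < S (Fin.last d) (Fin.last d) := hS.diag_pos
  obtain ⟨U, t, hUt⟩ := exists_eq_sblk_of_isHermitian hS.isHermitian hs.ne'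
  exact ⟨U, t, _, (posDef_sblk_iff.mp (hUt ▸ hS)).1, hs, hUt⟩

end Sblk

lemma dotProduct_inv_mulVec_of_mulVec_eq {ι : Type*} [Fintype ι] [DecidableEq ι]
    {A : Matrix ι ι ℝ} (hA : IsUnit A.det) {y w : ι → ℝ} (hw : A *ᵥ w = y) :
    y ⬝ᵥ (A⁻¹ *ᵥ y) = y ⬝ᵥ w := by
  rw [← hw, mulVec_mulVec, nonsing_inv_mul A hA, one_mulVec]

section Likelihood

variable {d : ℕ} {U : Matrix (Fin d) (Fin d) ℝ} {t : Fin d → ℝ} {s : ℝ}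

lemma liftPt_dotProduct_inv_sblk_mulVec (hU : IsUnit U.det) (hs : s ≠ 0) (x : Fin d → ℝ) :
    liftPt x ⬝ᵥ ((Sblk U t s)⁻¹ *ᵥ liftPt x) = (x - t) ⬝ᵥ (U⁻¹ *ᵥ (x - t)) + s⁻¹ := by
  set v := U⁻¹ *ᵥ (x - t)
  have hsolve : Sblk U t s *ᵥ Fin.snoc v (s⁻¹ - t ⬝ᵥ v) = liftPt x := by
    rw [sblk_mulVec_snoc, add_sub_cancel, mul_inv_cancel₀ hs, one_smul, mulVec_mulVec,
      mul_nonsing_inv U hU, one_mulVec, sub_add_cancel]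
    rfl
  have hdet : IsUnit (Sblk U t s).det := by
    rw [det_sblk]; exact hs.isUnit.mul hU
  rw [dotProduct_inv_mulVec_of_mulVec_eq hdet hsolve, liftPt, snoc_dotProduct_snoc,
    sub_dotProduct]
  ring

lemma log_pN (x μ : Fin d → ℝ) {C : Matrix (Fin d) (Fin d) ℝ} (hC : 0 < C.det) :
    log (pN x μ C) = -log C.det / 2 - d / 2 * log (2 * π) - (x - μ) ⬝ᵥ (C⁻¹ *ᵥ (x - μ)) / 2 := by
  rw [pN, log_mul (by positivity) (exp_pos _).ne', log_mul (by positivity) (by positivity),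
    log_rpow hC, log_rpow (by positivity), log_exp]
  ring

lemma log_qN (y : Fin (d+1) → ℝ) {S : Matrix (Fin (d+1)) (Fin (d+1)) ℝ} (hS : 0 < S.det) :
    log (qN y S) = (1 - log S.det - d * log (2 * π) - y ⬝ᵥ (S⁻¹ *ᵥ y)) / 2 := by
  rw [qN, log_mul (by positivity) (exp_pos _).ne', log_mul (by positivity) (by positivity),
    log_mul (by positivity) (by positivity), log_rpow (by positivity), log_rpow hS,
    log_rpow (by positivity), log_exp, log_mul (by positivity) (exp_pos _).ne', log_exp]
  ring

lemma log_qN_liftPt_sblk (hU : U.PosDef) (hs : 0 < s) (x : Fin d → ℝ) :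
    log (qN (liftPt x) (Sblk U t s)) = log (pN x t U) - (log s + s⁻¹ - 1) / 2 := by
  have hdet := hU.det_pos
  rw [log_qN _ (by rw [det_sblk]; positivity), log_pN _ _ hdet, det_sblk,
    liftPt_dotProduct_inv_sblk_mulVec hdet.ne'.isUnit hs.ne', log_mul hs.ne' hdet.ne']
  ring

lemma lhat_sblk {n : ℕ} (x : Fin n → Fin d → ℝ) (hU : U.PosDef) (hs : 0 < s) :
    Lhat x (Sblk U t s) = Lgauss x t U - n * ((log s + s⁻¹ - 1) / 2) := by
  simp [Lhat, Lgauss, log_qN_liftPt_sblk hU hs, Finset.sum_sub_distrib]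

end Likelihood

lemma one_le_log_add_inv {s : ℝ} (hs : 0 < s) : 1 ≤ log s + s⁻¹ := by
  have h := log_le_sub_one_of_pos (inv_pos.mpr hs)
  rw [log_inv] at h
  linarith

lemma log_add_inv_eq_one_iff {s : ℝ} (hs : 0 < s) : log s + s⁻¹ = 1 ↔ s = 1 := by
  refine ⟨fun h => by_contra fun hne => ?_, fun h => by simp [h]⟩
  have h' := log_lt_sub_one_of_pos (inv_pos.mpr hs) (inv_ne_one.mpr hne)
  rw [log_inv] at h'
  linarith

/-- the unique maximizer of the Gaussian log-likelihood and a maximizer of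
the reformulated log-likelihood are related by the block formula, and the optimal values agree. -/
theorem reformulation_single_gaussian {d n : ℕ} (hd : 1 ≤ d) (x : Fin n → Fin d → ℝ)
    (μs : Fin d → ℝ) (Cs : Matrix (Fin d) (Fin d) ℝ) (hCs : Cs.PosDef)
    (hmax : ∀ (μ : Fin d → ℝ) (C : Matrix (Fin d) (Fin d) ℝ), C.PosDef →
      Lgauss x μ C ≤ Lgauss x μs Cs)
    (huniq : ∀ (μ : Fin d → ℝ) (C : Matrix (Fin d) (Fin d) ℝ), C.PosDef →
      Lgauss x μ C = Lgauss x μs Cs → μ = μs ∧ C = Cs)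
    (Ss : Matrix (Fin (d+1)) (Fin (d+1)) ℝ) (hSs : Ss.PosDef)
    (hSmax : ∀ S : Matrix (Fin (d+1)) (Fin (d+1)) ℝ, S.PosDef → Lhat x S ≤ Lhat x Ss) :
    Lhat x Ss = Lgauss x μs Cs ∧ Ss = Sblk Cs μs 1 := by
  -- Without data every mean maximizes the likelihood, contradicting uniqueness.
  have hn : (0 : ℝ) < n := by
    refine Nat.cast_pos.mpr (Nat.pos_of_ne_zero fun hn => ?_)
    subst hn
    have hμ := (huniq (μs + 1) Cs hCs (by simp [Lgauss])).1
    simpa using congrFun hμ ⟨0, hd⟩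
  obtain ⟨U, t, s, hU, hs, rfl⟩ := exists_eq_sblk_of_posDef hSs
  have hopt : Lgauss x μs Cs ≤ Lgauss x t U - n * ((log s + s⁻¹ - 1) / 2) := by
    simpa [lhat_sblk x hCs one_pos, lhat_sblk x hU hs] using
      hSmax _ (posDef_sblk (t := μs) hCs one_pos)
  have hle := hmax t U hU
  have hgap := one_le_log_add_inv hs
  have hs1 : log s + s⁻¹ = 1 := by nlinarith
  rw [hs1, sub_self, zero_div, mul_zero, sub_zero] at hopt
  obtain ⟨rfl, rfl⟩ := huniq t U hU (le_antisymm hle hopt)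
  rw [lhat_sblk x hU hs, hs1, (log_add_inv_eq_one_iff hs).mp hs1]
  simp
end

section
/- Let ψ be a real-valued function on the symmetric positive definite (d+1)×(d+1) matrices that splits over the block parametrization as ψ(S(U,t,s)) = ψ₁(U,t) + ψ₂(s), where ψ₂ : (0,∞) → ℝ attains its maximum uniquely at s = 1. Suppose S* maximizes ψ(S) + L̂(S) over the symmetric positive definite (d+1)×(d+1) matrices, and (μ*, Σ*) is the unique maximizer of ψ₁(Σ, μ) + L(μ, Σ) over ℝ^d × {symmetric positive definite d×d matrices}. Then S* = [[Σ* + μ*μ*ᵀ, μ*], [μ*ᵀ, 1]]. -/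
open Matrix Real

/-! Every positive definite `S` is `Sblk U t s` with `U` positive definite and `s > 0`; the
`LDLᵀ` factorization of `Sblk U t s` gives `det S = s det U`, and `S` maps
`(U⁻¹(x - t), 1/s - tᵀU⁻¹(x - t))` to `(x, 1)`, so
`(x, 1)ᵀ S⁻¹ (x, 1) = (x - t)ᵀ U⁻¹ (x - t) + 1/s`.
Hence `L̂ (Sblk U t s) = L (t, U) + n (1 - log s - 1/s) / 2`, whose second term is `≤ 0` with
equality at `s = 1`. Comparing `S* = Sblk U t s` with the competitor `Sblk Σ* μ* 1` and using
`ψ₂ s < ψ₂ 1` for `s ≠ 1` forces `s = 1`, and then `(t, U) = (μ*, Σ*)` by uniqueness. -/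

section BlockMatrix

open scoped ComplexOrder

variable {m n 𝕜 : Type*} [RCLike 𝕜]

theorem Matrix.posDef_reindex_iff (e : m ≃ n) {M : Matrix m m 𝕜} :
    (reindex e e M).PosDef ↔ M.PosDef := by
  refine ⟨fun h => ?_, fun h => h.submatrix e.symm.injective⟩
  simpa [submatrix_submatrix] using h.submatrix e.injective

theorem Matrix.posDef_fromBlocks_zero_iff [Fintype m] [Fintype n] [DecidableEq m]
    [DecidableEq n] {A : Matrix m m 𝕜} {D : Matrix n n 𝕜} :
    (fromBlocks A 0 0 D).PosDef ↔ A.PosDef ∧ D.PosDef := by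
  refine ⟨fun h => ⟨?_, ?_⟩, fun ⟨hA, hD⟩ => ?_⟩
  · exact h.submatrix Sum.inl_injective
  · exact h.submatrix Sum.inr_injective
  · have := hA.isUnit.invertible
    have hpsd : (fromBlocks A 0 0 D).PosSemidef := by
      simpa using (PosDef.fromBlocks₁₁ (0 : Matrix m n 𝕜) D hA).2 (by simpa using hD.posSemidef)
    rw [hpsd.posDef_iff_det_ne_zero, det_fromBlocks_zero₂₁]
    exact mul_ne_zero ((isUnit_iff_isUnit_det _).1 hA.isUnit).ne_zero
      ((isUnit_iff_isUnit_det _).1 hD.isUnit).ne_zero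

end BlockMatrix

theorem Matrix.posDef_smul_one_iff {n : Type*} [Fintype n] [DecidableEq n] [Nonempty n]
    {s : ℝ} :
    (s • (1 : Matrix n n ℝ)).PosDef ↔ 0 < s := by
  refine ⟨fun h => ?_, fun hs => PosDef.one.smul hs⟩
  simpa using h.diag_pos (i := Classical.arbitrary n)

section Sblk

variable {d : ℕ}

theorem Sblk_eq_reindex (U : Matrix (Fin d) (Fin d) ℝ) (t : Fin d → ℝ) (s : ℝ) :
    Sblk U t s = reindex finSumFinEquiv finSumFinEquiv
      (fromBlocks 1 (replicateCol (Fin 1) t) 0 1 * fromBlocks U 0 0 (s • 1) *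
        (fromBlocks 1 (replicateCol (Fin 1) t) 0 1)ᵀ) := by
  simp only [fromBlocks_transpose, fromBlocks_multiply]
  ext i j
  induction i using Fin.lastCases <;> induction j using Fin.lastCases <;>
    simp [Sblk, finSumFinEquiv_symm_last, mul_apply, mul_assoc]

theorem det_Sblk (U : Matrix (Fin d) (Fin d) ℝ) (t : Fin d → ℝ) (s : ℝ) :
    (Sblk U t s).det = s * U.det := by
  rw [Sblk_eq_reindex, reindex_apply, det_submatrix_equiv_self, det_mul, det_mul, det_transpose]
  simp [det_fromBlocks_zero₂₁, mul_comm]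

theorem posDef_Sblk_iff {U : Matrix (Fin d) (Fin d) ℝ} {t : Fin d → ℝ} {s : ℝ} :
    (Sblk U t s).PosDef ↔ U.PosDef ∧ 0 < s := by
  set L : Matrix (Fin d ⊕ Fin 1) (Fin d ⊕ Fin 1) ℝ := fromBlocks 1 (replicateCol (Fin 1) t) 0 1
  have hL : IsUnit L := by simp [L, isUnit_iff_isUnit_det]
  rw [Sblk_eq_reindex, posDef_reindex_iff, ← conjTranspose_eq_transpose_of_trivial,
    ← star_eq_conjTranspose, hL.posDef_star_right_conjugate_iff, posDef_fromBlocks_zero_iff,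
    posDef_smul_one_iff]

theorem Fin.snoc_dotProduct_snoc {R : Type*} [CommSemiring R] (a v : Fin d → R) (b c : R) :
    (Fin.snoc a b : Fin (d + 1) → R) ⬝ᵥ Fin.snoc v c = a ⬝ᵥ v + b * c := by
  simp [dotProduct, Fin.sum_univ_castSucc]

theorem Sblk_mulVec_snoc (U : Matrix (Fin d) (Fin d) ℝ) (t : Fin d → ℝ) (s : ℝ)
    (v : Fin d → ℝ) (c : ℝ) :
    Sblk U t s *ᵥ Fin.snoc v c =
      Fin.snoc (U *ᵥ v + (s * (t ⬝ᵥ v + c)) • t) (s * (t ⬝ᵥ v + c)) := by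
  ext i
  induction i using Fin.lastCases with
  | last =>
    simp [Sblk, mulVec, dotProduct, Fin.sum_univ_castSucc, mul_add, Finset.mul_sum, mul_assoc]
  | cast i =>
    simp [Sblk, mulVec, dotProduct, Fin.sum_univ_castSucc, add_mul, mul_add,
      Finset.sum_add_distrib, Finset.mul_sum, Finset.sum_mul]
    ring_nf

theorem liftPt_dotProduct_Sblk_inv_mulVec {U : Matrix (Fin d) (Fin d) ℝ} (t : Fin d → ℝ) {s : ℝ}
    (hU : IsUnit U.det) (hs : s ≠ 0) (x : Fin d → ℝ) :
    liftPt x ⬝ᵥ ((Sblk U t s)⁻¹ *ᵥ liftPt x) = (x - t) ⬝ᵥ (U⁻¹ *ᵥ (x - t)) + s⁻¹ := by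
  set w := U⁻¹ *ᵥ (x - t)
  have hSw : Sblk U t s *ᵥ Fin.snoc w (s⁻¹ - t ⬝ᵥ w) = liftPt x := by
    rw [Sblk_mulVec_snoc, add_sub_cancel, mul_inv_cancel₀ hs, one_smul, mulVec_mulVec,
      mul_nonsing_inv _ hU, one_mulVec, sub_add_cancel, liftPt]
  have hdet : IsUnit (Sblk U t s).det := by
    rw [det_Sblk]
    exact (isUnit_iff_ne_zero.2 hs).mul hU
  have hinv : (Sblk U t s)⁻¹ *ᵥ liftPt x = Fin.snoc w (s⁻¹ - t ⬝ᵥ w) := by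
    rw [← hSw, mulVec_mulVec, nonsing_inv_mul _ hdet, one_mulVec]
  rw [hinv, liftPt, Fin.snoc_dotProduct_snoc, sub_dotProduct]
  ring

theorem exists_posDef_Sblk_eq {S : Matrix (Fin (d + 1)) (Fin (d + 1)) ℝ} (hS : S.PosDef) :
    ∃ U t s, U.PosDef ∧ 0 < s ∧ Sblk U t s = S := by
  set s := S (Fin.last d) (Fin.last d)
  set t : Fin d → ℝ := fun i => S i.castSucc (Fin.last d) / s
  set U : Matrix (Fin d) (Fin d) ℝ := of fun i j => S i.castSucc j.castSucc - s * t i * t j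
  have hs : 0 < s := hS.diag_pos
  have hSblk : Sblk U t s = S := by
    ext i j
    induction i using Fin.lastCases with
    | last =>
      induction j using Fin.lastCases with
      | last => simp [Sblk, s]
      | cast j =>
        rw [← hS.1.apply]
        simp [Sblk, t, mul_div_cancel₀ _ hs.ne']
    | cast i =>
      induction j using Fin.lastCases with
      | last => simp [Sblk, t, mul_div_cancel₀ _ hs.ne']
      | cast j => simp [Sblk, U]
  exact ⟨U, t, s, (posDef_Sblk_iff.1 (hSblk ▸ hS)).1, hs, hSblk⟩

/-- The logarithm of the factor `(2πe)^{1/2} s^{-1/2} (2π)^{-1/2} exp(-1/(2s))` by which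
`qN (x, 1) (Sblk U t s)` exceeds `pN x t U`. -/
noncomputable def scaleLogFactor (s : ℝ) : ℝ := (1 - Real.log s - s⁻¹) / 2

theorem scaleLogFactor_nonpos {s : ℝ} (hs : 0 < s) : scaleLogFactor s ≤ 0 := by
  have h := Real.log_le_sub_one_of_pos (inv_pos.2 hs)
  rw [Real.log_inv] at h
  unfold scaleLogFactor
  linarith

theorem scaleLogFactor_one : scaleLogFactor 1 = 0 := by
  simp [scaleLogFactor]

theorem log_qN_liftPt_Sblk {U : Matrix (Fin d) (Fin d) ℝ} (t : Fin d → ℝ) {s : ℝ}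
    (hU : U.PosDef) (hs : 0 < s) (x : Fin d → ℝ) :
    Real.log (qN (liftPt x) (Sblk U t s)) = Real.log (pN x t U) + scaleLogFactor s := by
  have hdet := hU.det_pos
  rw [qN, pN, liftPt_dotProduct_Sblk_inv_mulVec t (isUnit_iff_ne_zero.2 hdet.ne') hs.ne',
    det_Sblk, scaleLogFactor]
  rw [Real.log_mul, Real.log_mul, Real.log_mul, Real.log_mul, Real.log_mul, Real.log_rpow,
    Real.log_rpow, Real.log_rpow, Real.log_rpow, Real.log_rpow, Real.log_mul, Real.log_mul,
    Real.log_exp, Real.log_exp, Real.log_exp]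
  · rw [Real.log_mul hs.ne' hdet.ne']
    ring
  all_goals positivity

theorem Lhat_Sblk {n : ℕ} (x : Fin n → Fin d → ℝ) {U : Matrix (Fin d) (Fin d) ℝ} (t : Fin d → ℝ)
    {s : ℝ} (hU : U.PosDef) (hs : 0 < s) :
    Lhat x (Sblk U t s) = Lgauss x t U + n * scaleLogFactor s := by
  simp only [Lhat, Lgauss, log_qN_liftPt_Sblk t hU hs, Finset.sum_add_distrib, Finset.sum_const,
    Finset.card_univ, Fintype.card_fin, nsmul_eq_mul]

end Sblk

theorem penalized_reformulation_general {d n : ℕ} (x : Fin n → Fin d → ℝ)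
    (ψ : Matrix (Fin (d+1)) (Fin (d+1)) ℝ → ℝ)
    (ψ1 : Matrix (Fin d) (Fin d) ℝ → (Fin d → ℝ) → ℝ) (ψ2 : ℝ → ℝ)
    (hsplit : ∀ (U : Matrix (Fin d) (Fin d) ℝ) (t : Fin d → ℝ) (s : ℝ),
      U.PosDef → 0 < s → ψ (Sblk U t s) = ψ1 U t + ψ2 s)
    (hψ2 : ∀ s : ℝ, 0 < s → s ≠ 1 → ψ2 s < ψ2 1)
    (Ss : Matrix (Fin (d+1)) (Fin (d+1)) ℝ) (hSs : Ss.PosDef)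
    (hSmax : ∀ S : Matrix (Fin (d+1)) (Fin (d+1)) ℝ, S.PosDef →
      ψ S + Lhat x S ≤ ψ Ss + Lhat x Ss)
    (μs : Fin d → ℝ) (Cs : Matrix (Fin d) (Fin d) ℝ) (hCs : Cs.PosDef)
    (hmax : ∀ (μ : Fin d → ℝ) (C : Matrix (Fin d) (Fin d) ℝ), C.PosDef →
      ψ1 C μ + Lgauss x μ C ≤ ψ1 Cs μs + Lgauss x μs Cs)
    (huniq : ∀ (μ : Fin d → ℝ) (C : Matrix (Fin d) (Fin d) ℝ), C.PosDef →
      ψ1 C μ + Lgauss x μ C = ψ1 Cs μs + Lgauss x μs Cs → μ = μs ∧ C = Cs) :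
    Ss = Sblk Cs μs 1 := by
  obtain ⟨U, t, s, hU, hs, rfl⟩ := exists_posDef_Sblk_eq hSs
  have hopt := hSmax (Sblk Cs μs 1) (posDef_Sblk_iff.2 ⟨hCs, one_pos⟩)
  rw [hsplit U t s hU hs, hsplit Cs μs 1 hCs one_pos, Lhat_Sblk x t hU hs,
    Lhat_Sblk x μs hCs one_pos, scaleLogFactor_one, mul_zero, add_zero] at hopt
  have hfit := hmax t U hU
  have hscale : (n : ℝ) * scaleLogFactor s ≤ 0 :=
    mul_nonpos_of_nonneg_of_nonpos n.cast_nonneg (scaleLogFactor_nonpos hs)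
  obtain rfl : s = 1 := by
    by_contra hs1
    linarith [hψ2 s hs hs1]
  obtain ⟨rfl, rfl⟩ := huniq t U hU (by linarith)
  rfl

/-- penalized reformulation. If the penalizer splits over the block
parametrization with s-part uniquely maximized at s = 1, then the maximizer of the
penalized reformulated likelihood is the block matrix built from the unique maximizer
of the penalized Gaussian log-likelihood. -/
theorem penalized_reformulation {d n : ℕ} (hd : 1 ≤ d) (x : Fin n → Fin d → ℝ)
    (ψ : Matrix (Fin (d+1)) (Fin (d+1)) ℝ → ℝ)
    (ψ1 : Matrix (Fin d) (Fin d) ℝ → (Fin d → ℝ) → ℝ) (ψ2 : ℝ → ℝ)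
    (hsplit : ∀ (U : Matrix (Fin d) (Fin d) ℝ) (t : Fin d → ℝ) (s : ℝ),
      U.PosDef → 0 < s → ψ (Sblk U t s) = ψ1 U t + ψ2 s)
    (hψ2 : ∀ s : ℝ, 0 < s → s ≠ 1 → ψ2 s < ψ2 1)
    (Ss : Matrix (Fin (d+1)) (Fin (d+1)) ℝ) (hSs : Ss.PosDef)
    (hSmax : ∀ S : Matrix (Fin (d+1)) (Fin (d+1)) ℝ, S.PosDef →
      ψ S + Lhat x S ≤ ψ Ss + Lhat x Ss)
    (μs : Fin d → ℝ) (Cs : Matrix (Fin d) (Fin d) ℝ) (hCs : Cs.PosDef)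
    (hmax : ∀ (μ : Fin d → ℝ) (C : Matrix (Fin d) (Fin d) ℝ), C.PosDef →
      ψ1 C μ + Lgauss x μ C ≤ ψ1 Cs μs + Lgauss x μs Cs)
    (huniq : ∀ (μ : Fin d → ℝ) (C : Matrix (Fin d) (Fin d) ℝ), C.PosDef →
      ψ1 C μ + Lgauss x μ C = ψ1 Cs μs + Lgauss x μs Cs → μ = μs ∧ C = Cs) :
    Ss = Sblk Cs μs 1 :=
  penalized_reformulation_general x ψ ψ1 ψ2 hsplit hψ2 Ss hSs hSmax μs Cs hCs hmax huniq
end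

section
/- In addition to the hypotheses of the SGD lemma (almost surely F_{t+1} ≤ F_t + ⟨G_t, −η_t(G_t − Δ_t)⟩ + (L/2)‖η_t(G_t − Δ_t)‖² for t ≤ T and F_{T+1} ≥ f*; E[⟨G_t, Δ_t⟩] = 0; E[‖Δ_t‖²] ≤ σ²), assume σ > 0, c > 0, E[F₁] ≥ f*, and that the stepsize is constant, η_t = η = min{1/L, c σ^{−1} T^{−1/2}}. Then the expected squared gradient norm of a uniformly randomly chosen iterate satisfies (1/T) Σ_{t=1}^T E[‖G_t‖²] ≤ 2L Δ₁ / T + (2Δ₁/c + L c) σ / √T, where Δ₁ = E[F₁] − f*. In particular the expected gap to stationarity is O(1/T) + O(1/√T). -/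
/-!
Expanding the retraction step, the growth bound reads
`F_{t+1} ≤ F_t - (η - Lη²/2)‖G_t‖² + (η - Lη²)⟨G_t, Δ_t⟩ + (Lη²/2)‖Δ_t‖²`.
Taking expectations kills the cross term and bounds the noise term by `σ²`; for `η ≤ 1/L` the
coefficient of `‖G_t‖²` is at least `η/2`. Summing over `t` telescopes the `F_t`, so
`(1/T) Σ E‖G_t‖² ≤ 2Δ₁/(ηT) + Lησ²`, and the choice `η = min (1/L) (c/(σ√T))` gives
`1/η ≤ L + σ√T/c` and `η ≤ c/(σ√T)`.
-/

open MeasureTheory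

theorem Fin.sum_univ_castSucc_sub_succ {M : Type*} [AddCommGroup M] {n : ℕ}
    (f : Fin (n + 1) → M) :
    ∑ i : Fin n, (f i.castSucc - f i.succ) = f 0 - f (Fin.last n) := by
  induction n with
  | zero => simp
  | succ n ih =>
    rw [Fin.sum_univ_castSucc]
    simp_rw [Fin.succ_castSucc]
    rw [ih fun i => f i.castSucc]
    simp

theorem one_div_min_le_one_div_add_one_div {a b : ℝ} (ha : 0 < a) (hb : 0 < b) :
    1 / min a b ≤ 1 / a + 1 / b := by
  rcases min_choice a b with h | h <;> rw [h] <;> simp <;> positivity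

section Descent

variable {Ω : Type*} [MeasurableSpace Ω] {μ : Measure Ω}
  {H : Type*} [NormedAddCommGroup H] [InnerProductSpace ℝ H]

theorem inner_neg_smul_sub_add_norm_smul_sub_sq (η L : ℝ) (g d : H) :
    (inner ℝ g (-η • (g - d)) : ℝ) + L / 2 * ‖η • (g - d)‖ ^ 2
      = -(η - L * η ^ 2 / 2) * ‖g‖ ^ 2 + (η - L * η ^ 2) * inner ℝ g d
        + L * η ^ 2 / 2 * ‖d‖ ^ 2 := by
  rw [real_inner_smul_right, inner_sub_right, real_inner_self_eq_norm_sq, norm_smul,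
    mul_pow, Real.norm_eq_abs, sq_abs, norm_sub_sq_real]
  ring

theorem integral_sgd_descent {f f' : Ω → ℝ} {g d : Ω → H} {η L σ : ℝ} (hL : 0 ≤ L)
    (hf : Integrable f μ) (hf' : Integrable f' μ)
    (hg : Integrable (fun ω => ‖g ω‖ ^ 2) μ) (hd : Integrable (fun ω => ‖d ω‖ ^ 2) μ)
    (hgd : Integrable (fun ω => (inner ℝ (g ω) (d ω) : ℝ)) μ)
    (hstep : ∀ᵐ ω ∂μ, f' ω ≤ f ω + (inner ℝ (g ω) (-η • (g ω - d ω)) : ℝ)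
      + L / 2 * ‖η • (g ω - d ω)‖ ^ 2)
    (hunbiased : ∫ ω, (inner ℝ (g ω) (d ω) : ℝ) ∂μ = 0)
    (hvar : ∫ ω, ‖d ω‖ ^ 2 ∂μ ≤ σ ^ 2) :
    (η - L * η ^ 2 / 2) * ∫ ω, ‖g ω‖ ^ 2 ∂μ
      ≤ (∫ ω, f ω ∂μ - ∫ ω, f' ω ∂μ) + L * η ^ 2 / 2 * σ ^ 2 := by
  have hdecr := hg.const_mul (-(η - L * η ^ 2 / 2))
  have hcross := hgd.const_mul (η - L * η ^ 2)
  have hnoise_int := hd.const_mul (L * η ^ 2 / 2)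
  have hdecr_cross : Integrable (fun ω => -(η - L * η ^ 2 / 2) * ‖g ω‖ ^ 2
      + (η - L * η ^ 2) * inner ℝ (g ω) (d ω)) μ := hdecr.add hcross
  have hincr : Integrable (fun ω => -(η - L * η ^ 2 / 2) * ‖g ω‖ ^ 2
      + (η - L * η ^ 2) * inner ℝ (g ω) (d ω) + L * η ^ 2 / 2 * ‖d ω‖ ^ 2) μ :=
    hdecr_cross.add hnoise_int
  have hmono : ∫ ω, f' ω ∂μ ≤ ∫ ω, f ω + (-(η - L * η ^ 2 / 2) * ‖g ω‖ ^ 2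
      + (η - L * η ^ 2) * inner ℝ (g ω) (d ω) + L * η ^ 2 / 2 * ‖d ω‖ ^ 2) ∂μ := by
    refine integral_mono_ae hf' (hf.add hincr) ?_
    filter_upwards [hstep] with ω hω
    simpa only [add_assoc, inner_neg_smul_sub_add_norm_smul_sub_sq] using hω
  rw [integral_add hf hincr, integral_add hdecr_cross hnoise_int, integral_add hdecr hcross,
    integral_const_mul, integral_const_mul, integral_const_mul, hunbiased] at hmono
  have hnoise : L * η ^ 2 / 2 * ∫ ω, ‖d ω‖ ^ 2 ∂μ ≤ L * η ^ 2 / 2 * σ ^ 2 :=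
    mul_le_mul_of_nonneg_left hvar (by positivity)
  linarith

theorem sum_integral_sgd_descent {T : ℕ} {F : Fin (T + 1) → Ω → ℝ} {G Δ : Fin T → Ω → H}
    {η L σ : ℝ} (hL : 0 ≤ L) (hF : ∀ t, Integrable (F t) μ)
    (hG : ∀ t, Integrable (fun ω => ‖G t ω‖ ^ 2) μ)
    (hΔ : ∀ t, Integrable (fun ω => ‖Δ t ω‖ ^ 2) μ)
    (hGΔ : ∀ t, Integrable (fun ω => (inner ℝ (G t ω) (Δ t ω) : ℝ)) μ)
    (hstep : ∀ᵐ ω ∂μ, ∀ t : Fin T, F t.succ ω ≤ F t.castSucc ω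
      + (inner ℝ (G t ω) (-η • (G t ω - Δ t ω)) : ℝ) + L / 2 * ‖η • (G t ω - Δ t ω)‖ ^ 2)
    (hunbiased : ∀ t, ∫ ω, (inner ℝ (G t ω) (Δ t ω) : ℝ) ∂μ = 0)
    (hvar : ∀ t, ∫ ω, ‖Δ t ω‖ ^ 2 ∂μ ≤ σ ^ 2) :
    (η - L * η ^ 2 / 2) * ∑ t, ∫ ω, ‖G t ω‖ ^ 2 ∂μ
      ≤ (∫ ω, F 0 ω ∂μ - ∫ ω, F (Fin.last T) ω ∂μ) + T * (L * η ^ 2 / 2 * σ ^ 2) := by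
  calc (η - L * η ^ 2 / 2) * ∑ t, ∫ ω, ‖G t ω‖ ^ 2 ∂μ
      ≤ ∑ t : Fin T, ((∫ ω, F t.castSucc ω ∂μ - ∫ ω, F t.succ ω ∂μ)
          + L * η ^ 2 / 2 * σ ^ 2) := by
        rw [Finset.mul_sum]
        exact Finset.sum_le_sum fun t _ => integral_sgd_descent hL (hF _) (hF _) (hG t) (hΔ t)
          (hGΔ t) (hstep.mono fun ω hω => hω t) (hunbiased t) (hvar t)
    _ = (∫ ω, F 0 ω ∂μ - ∫ ω, F (Fin.last T) ω ∂μ) + T * (L * η ^ 2 / 2 * σ ^ 2) := by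
        rw [Finset.sum_add_distrib, Fin.sum_univ_castSucc_sub_succ (fun t => ∫ ω, F t ω ∂μ)]
        simp

end Descent

theorem div_le_of_sgd_descent {A D T η L σ : ℝ} (hT : 0 < T) (hη : 0 < η) (hηL : η * L ≤ 1)
    (hA : 0 ≤ A) (h : (η - L * η ^ 2 / 2) * A ≤ D + T * (L * η ^ 2 / 2 * σ ^ 2)) :
    A / T ≤ 2 * D / (η * T) + L * η * σ ^ 2 := by
  have hhalf : η / 2 * A ≤ (η - L * η ^ 2 / 2) * A :=
    mul_le_mul_of_nonneg_right (by nlinarith) hA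
  have hA' : A ≤ 2 * D / η + T * (L * η * σ ^ 2) := by
    rw [div_add' _ _ _ hη.ne', le_div_iff₀ hη]
    nlinarith
  calc A / T ≤ (2 * D / η + T * (L * η * σ ^ 2)) / T := by gcongr
    _ = 2 * D / (η * T) + L * η * σ ^ 2 := by field_simp

theorem riemannian_sgd_rate_general {Ω : Type*} [MeasureSpace Ω]
    [IsProbabilityMeasure (volume : Measure Ω)]
    {H : Type*} [NormedAddCommGroup H] [InnerProductSpace ℝ H]
    (T : ℕ) (L : ℝ) (hL : 0 < L) (σ : ℝ) (hσ : 0 < σ) (fstar : ℝ)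
    (c : ℝ) (hc : 0 < c)
    (η : ℝ) (hη : η = min (1/L) (c / (σ * Real.sqrt T)))
    (F : Fin (T+1) → Ω → ℝ) (G Δ : Fin T → Ω → H)
    (hFint : ∀ t, Integrable (F t))
    (hGint : ∀ t, Integrable (fun ω => ‖G t ω‖^2))
    (hΔint : ∀ t, Integrable (fun ω => ‖Δ t ω‖^2))
    (hGΔint : ∀ t, Integrable (fun ω => (inner ℝ (G t ω) (Δ t ω) : ℝ)))
    (hstep : ∀ᵐ ω ∂(volume : Measure Ω), ∀ t : Fin T,
      F t.succ ω ≤ F t.castSucc ω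
        + (inner ℝ (G t ω) (-η • (G t ω - Δ t ω)) : ℝ)
        + L/2 * ‖η • (G t ω - Δ t ω)‖^2)
    (hlast : ∀ᵐ ω ∂(volume : Measure Ω), fstar ≤ F (Fin.last T) ω)
    (hunbiased : ∀ t : Fin T, ∫ ω, (inner ℝ (G t ω) (Δ t ω) : ℝ) = 0)
    (hvar : ∀ t : Fin T, (∫ ω, ‖Δ t ω‖^2) ≤ σ^2)
    (hF1 : fstar ≤ ∫ ω, F 0 ω) :
    (1 / (T : ℝ)) * ∑ t : Fin T, (∫ ω, ‖G t ω‖^2)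
      ≤ 2 * L * ((∫ ω, F 0 ω) - fstar) / T
        + (2 * ((∫ ω, F 0 ω) - fstar) / c + L * c) * σ / Real.sqrt T := by
  rcases Nat.eq_zero_or_pos T with rfl | hT
  · -- both sides vanish, since `1 / 0 = 0` and `√0 = 0`
    simp
  have hTpos : (0 : ℝ) < T := Nat.cast_pos.mpr hT
  have hηpos : 0 < η := hη ▸ lt_min (by positivity) (by positivity)
  have hηL : η * L ≤ 1 := (le_div_iff₀ hL).mp (hη ▸ min_le_left _ _)
  have hηc : η ≤ c / (σ * Real.sqrt T) := hη ▸ min_le_right _ _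
  have hinv : 1 / η ≤ L + σ * Real.sqrt T / c := by
    simpa [hη] using one_div_min_le_one_div_add_one_div (one_div_pos.mpr hL)
      (by positivity : 0 < c / (σ * Real.sqrt T))
  have hlast' : fstar ≤ ∫ ω, F (Fin.last T) ω := by
    simpa using integral_mono_ae (integrable_const fstar) (hFint _) hlast
  have hdescent := sum_integral_sgd_descent hL.le hFint hGint hΔint hGΔint hstep hunbiased hvar
  set D := (∫ ω, F 0 ω) - fstar
  have hD : 0 ≤ D := sub_nonneg.mpr hF1
  have hrate := div_le_of_sgd_descent (D := D) (σ := σ) hTpos hηpos hηL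
    (Finset.sum_nonneg fun t _ => integral_nonneg fun ω => by positivity)
    (hdescent.trans (by linarith))
  calc (1 / (T : ℝ)) * ∑ t : Fin T, (∫ ω, ‖G t ω‖^2)
      ≤ 2 * D * (1 / η) / T + L * η * σ ^ 2 := by
        rw [one_div_mul_eq_div]; convert hrate using 2; ring
    _ ≤ 2 * D * (L + σ * Real.sqrt T / c) / T + L * (c / (σ * Real.sqrt T)) * σ ^ 2 := by
        gcongr
    _ = 2 * L * D / T + (2 * D / c + L * c) * σ / Real.sqrt T := by
        field_simp
        linear_combination 2 * D * σ * Real.mul_self_sqrt hTpos.le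

/-- convergence rate for (Riemannian) SGD with the constant stepsize
`η = min (1/L) (c σ⁻¹ T^{-1/2})`: the average expected squared gradient norm (i.e. the
expected squared gradient norm of a uniformly randomly chosen iterate) is
`O(1/T) + O(1/√T)`. Here `F 0 = F₁` and `F (Fin.last T) = F_{T+1}`. -/
theorem riemannian_sgd_rate {Ω : Type*} [MeasureSpace Ω]
    [IsProbabilityMeasure (volume : Measure Ω)]
    {H : Type*} [NormedAddCommGroup H] [InnerProductSpace ℝ H]
    (T : ℕ) (hT : 1 ≤ T) (L : ℝ) (hL : 0 < L) (σ : ℝ) (hσ : 0 < σ) (fstar : ℝ)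
    (c : ℝ) (hc : 0 < c)
    (η : ℝ) (hη : η = min (1/L) (c / (σ * Real.sqrt T)))
    (F : Fin (T+1) → Ω → ℝ) (G Δ : Fin T → Ω → H)
    (hFint : ∀ t, Integrable (F t))
    (hGint : ∀ t, Integrable (fun ω => ‖G t ω‖^2))
    (hΔint : ∀ t, Integrable (fun ω => ‖Δ t ω‖^2))
    (hGΔint : ∀ t, Integrable (fun ω => (inner ℝ (G t ω) (Δ t ω) : ℝ)))
    (hstep : ∀ᵐ ω ∂(volume : Measure Ω), ∀ t : Fin T,
      F t.succ ω ≤ F t.castSucc ω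
        + (inner ℝ (G t ω) (-η • (G t ω - Δ t ω)) : ℝ)
        + L/2 * ‖η • (G t ω - Δ t ω)‖^2)
    (hlast : ∀ᵐ ω ∂(volume : Measure Ω), fstar ≤ F (Fin.last T) ω)
    (hunbiased : ∀ t : Fin T, ∫ ω, (inner ℝ (G t ω) (Δ t ω) : ℝ) = 0)
    (hvar : ∀ t : Fin T, (∫ ω, ‖Δ t ω‖^2) ≤ σ^2)
    (hF1 : fstar ≤ ∫ ω, F 0 ω) :
    (1 / (T : ℝ)) * ∑ t : Fin T, (∫ ω, ‖G t ω‖^2)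
      ≤ 2 * L * ((∫ ω, F 0 ω) - fstar) / T
        + (2 * ((∫ ω, F 0 ω) - fstar) / c + L * c) * σ / Real.sqrt T :=
  riemannian_sgd_rate_general T L hL σ hσ fstar c hc η hη F G Δ hFint hGint hΔint hGΔint hstep hlast
    hunbiased hvar hF1
end

section
/- Let S and Ψ be real symmetric m×m matrices with S positive definite and Ψ positive semidefinite, let y ∈ ℝ^m, and let w ∈ [0,1], η ∈ (0,1], and let n, ρ, β be reals with n > 0, β > 0 and 0 < ρ ≤ n. Define the updated matrix S' = (1 − η(w + ρ/n)/2) S + η ((w/2) y yᵀ + (β/(2n)) Ψ). Then λ_min(S') ≥ min( λ_min(S), (β/(n+ρ)) λ_min(Ψ) ). (This is the single-step estimate showing that the smallest eigenvalue of the covariance-type iterates of SGD for the penalized GMM likelihood stays bounded away from zero, part of the proof that the SGD iterates remain in a compact set.) -/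
/-!
Weyl's inequality `λ_min(A + B) ≥ λ_min(A) + λ_min(B)` and positive homogeneity of `λ_min` bound
`λ_min(S')` below by `a λ_min(S) + η (β/(2n)) λ_min(Ψ)` with `a = 1 - η(w + ρ/n)/2 ≥ 0`, the rank-one
term contributing a nonnegative amount. Writing the second summand as `b · (β/(n+ρ)) λ_min(Ψ)` with
`b = η(n+ρ)/(2n)`, the weights satisfy `a + b = 1 + η(1-w)/2 ≥ 1`, so the combination dominates the
minimum of the two (nonnegative) quantities.
-/

open scoped Classical
open Matrix

/-- The smallest eigenvalue of a real symmetric matrix (junk value `0` if not symmetric). -/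
noncomputable def lambdaMin {m : ℕ} (A : Matrix (Fin m) (Fin m) ℝ) : ℝ :=
  if h : A.IsHermitian then ⨅ i, h.eigenvalues i else 0

/-- The largest eigenvalue of a real symmetric matrix (junk value `0` if not symmetric). -/
noncomputable def lambdaMax {m : ℕ} (A : Matrix (Fin m) (Fin m) ℝ) : ℝ :=
  if h : A.IsHermitian then ⨆ i, h.eigenvalues i else 0

theorem min_le_mul_add_mul {α : Type*} [Semiring α] [LinearOrder α] [IsOrderedRing α]
    {a b x y : α} (ha : 0 ≤ a) (hb : 0 ≤ b) (hab : 1 ≤ a + b) (hxy : 0 ≤ min x y) :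
    min x y ≤ a * x + b * y :=
  calc min x y ≤ (a + b) * min x y := le_mul_of_one_le_left hxy hab
    _ = a * min x y + b * min x y := add_mul a b _
    _ ≤ a * x + b * y := add_le_add (mul_le_mul_of_nonneg_left (min_le_left x y) ha)
        (mul_le_mul_of_nonneg_left (min_le_right x y) hb)

open scoped ComplexOrder Pointwise in
theorem Matrix.IsHermitian.posSemidef_sub_smul_one_iff {𝕜 n : Type*} [RCLike 𝕜] [Fintype n]
    [DecidableEq n] {A : Matrix n n 𝕜} (hA : A.IsHermitian) (c : ℝ) :
    (A - c • 1).PosSemidef ↔ ∀ i, c ≤ hA.eigenvalues i := by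
  have hB : (A - c • 1).IsHermitian := hA.sub (isHermitian_one.smul (IsSelfAdjoint.all c))
  have hspec : Set.range hB.eigenvalues = (· - c) '' Set.range hA.eigenvalues := by
    rw [← hA.spectrum_real_eq_range_eigenvalues, ← hB.spectrum_real_eq_range_eigenvalues,
      ← Set.sub_singleton, spectrum.sub_singleton_eq, Algebra.algebraMap_eq_smul_one]
  rw [hB.posSemidef_iff_eigenvalues_nonneg, Pi.le_def]
  simp [← Set.forall_mem_range (f := hB.eigenvalues), hspec]

section lambdaMin

variable {m : ℕ} {A B : Matrix (Fin m) (Fin m) ℝ}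

theorem lambdaMin_eq_iInf (hA : A.IsHermitian) : lambdaMin A = ⨅ i, hA.eigenvalues i :=
  dif_pos hA

theorem lambdaMin_of_fin_zero (A : Matrix (Fin 0) (Fin 0) ℝ) : lambdaMin A = 0 := by
  unfold lambdaMin
  split <;> simp

theorem le_lambdaMin_iff [NeZero m] (hA : A.IsHermitian) {c : ℝ} :
    c ≤ lambdaMin A ↔ (A - c • 1).PosSemidef := by
  rw [lambdaMin_eq_iInf hA, le_ciInf_iff (Set.finite_range _).bddBelow,
    hA.posSemidef_sub_smul_one_iff]

theorem lambdaMin_nonneg (hA : A.PosSemidef) : 0 ≤ lambdaMin A := by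
  rw [lambdaMin_eq_iInf hA.isHermitian]
  exact Real.iInf_nonneg hA.eigenvalues_nonneg

theorem lambdaMin_add_lambdaMin_le_lambdaMin_add (hA : A.IsHermitian) (hB : B.IsHermitian) :
    lambdaMin A + lambdaMin B ≤ lambdaMin (A + B) := by
  rcases m.eq_zero_or_pos with rfl | hm
  · simp [lambdaMin_of_fin_zero]
  have : NeZero m := ⟨hm.ne'⟩
  rw [le_lambdaMin_iff (hA.add hB), add_smul, add_sub_add_comm]
  exact ((le_lambdaMin_iff hA).1 le_rfl).add ((le_lambdaMin_iff hB).1 le_rfl)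

theorem mul_lambdaMin_le_lambdaMin_smul (hA : A.IsHermitian) {c : ℝ} (hc : 0 ≤ c) :
    c * lambdaMin A ≤ lambdaMin (c • A) := by
  rcases m.eq_zero_or_pos with rfl | hm
  · simp [lambdaMin_of_fin_zero]
  have : NeZero m := ⟨hm.ne'⟩
  rw [le_lambdaMin_iff (hA.smul (IsSelfAdjoint.all c)), mul_smul, ← smul_sub]
  exact ((le_lambdaMin_iff hA).1 le_rfl).smul hc

theorem lambdaMin_le_lambdaMin_add_of_posSemidef (hA : A.PosSemidef) (hB : B.IsHermitian) :
    lambdaMin B ≤ lambdaMin (A + B) :=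
  (le_add_of_nonneg_left (lambdaMin_nonneg hA)).trans
    (lambdaMin_add_lambdaMin_le_lambdaMin_add hA.isHermitian hB)

theorem mul_lambdaMin_add_mul_lambdaMin_le (hA : A.IsHermitian) (hB : B.IsHermitian) {a b : ℝ}
    (ha : 0 ≤ a) (hb : 0 ≤ b) : a * lambdaMin A + b * lambdaMin B ≤ lambdaMin (a • A + b • B) :=
  (add_le_add (mul_lambdaMin_le_lambdaMin_smul hA ha) (mul_lambdaMin_le_lambdaMin_smul hB hb)).trans
    (lambdaMin_add_lambdaMin_le_lambdaMin_add (hA.smul (IsSelfAdjoint.all a))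
      (hB.smul (IsSelfAdjoint.all b)))

end lambdaMin

section step

variable {w η n ρ : ℝ}

theorem sgd_step_coeff_nonneg (hw0 : 0 ≤ w) (hw1 : w ≤ 1) (hη1 : η ≤ 1) (hn : 0 < n)
    (hρ : 0 ≤ ρ) (hρn : ρ ≤ n) : 0 ≤ 1 - η * (w + ρ/n) / 2 := by
  have hsum : w + ρ/n ≤ 2 := by linarith [(div_le_one hn).2 hρn]
  have : η * (w + ρ/n) ≤ 1 * 2 :=
    mul_le_mul hη1 hsum (add_nonneg hw0 (div_nonneg hρ hn.le)) zero_le_one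
  linarith

theorem min_le_sgd_step {s p β : ℝ} (hs : 0 ≤ s) (hp : 0 ≤ p) (hw0 : 0 ≤ w) (hw1 : w ≤ 1)
    (hη0 : 0 ≤ η) (hη1 : η ≤ 1) (hn : 0 < n) (hβ : 0 ≤ β) (hρ : 0 ≤ ρ) (hρn : ρ ≤ n) :
    min s (β / (n + ρ) * p) ≤ (1 - η * (w + ρ/n) / 2) * s + η * (β/(2*n) * p) := by
  have hnρ : 0 < n + ρ := by linarith
  have hweights : η * (β/(2*n) * p) = η * (n + ρ) / (2*n) * (β / (n + ρ) * p) := by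
    field_simp
  have hsum : 1 - η * (w + ρ/n) / 2 + η * (n + ρ) / (2*n) = 1 + η * (1 - w) / 2 := by
    field_simp
    ring
  rw [hweights]
  refine min_le_mul_add_mul (sgd_step_coeff_nonneg hw0 hw1 hη1 hn hρ hρn) (by positivity) ?_
    (le_min hs (by positivity))
  rw [hsum]
  linarith [mul_nonneg hη0 (sub_nonneg.2 hw1)]

end step

/-- single-step lower bound on the smallest eigenvalue of the SGD update
`S' = (1 - η(w + ρ/n)/2) S + η ((w/2) y yᵀ + (β/(2n)) Ψ)` for the penalized GMM
likelihood. -/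
theorem sgd_gmm_lambdaMin_bound {m : ℕ}
    (S Ψ : Matrix (Fin m) (Fin m) ℝ) (hS : S.PosDef) (hΨ : Ψ.PosSemidef)
    (y : Fin m → ℝ) (w η n ρ β : ℝ)
    (hw : w ∈ Set.Icc (0:ℝ) 1) (hη : η ∈ Set.Ioc (0:ℝ) 1)
    (hn : 0 < n) (hβ : 0 < β) (hρ : 0 < ρ) (hρn : ρ ≤ n) :
    min (lambdaMin S) (β / (n + ρ) * lambdaMin Ψ)
      ≤ lambdaMin ((1 - η * (w + ρ/n) / 2) • S
          + η • ((w/2) • Matrix.vecMulVec y y + (β/(2*n)) • Ψ)) := by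
  obtain ⟨hw0, hw1⟩ := hw
  obtain ⟨hη0, hη1⟩ := hη
  have hyy : ((w/2) • vecMulVec y y).PosSemidef := by
    simpa using (posSemidef_vecMulVec_self_star y).smul (by positivity : 0 ≤ w/2)
  have hΨ' : ((β/(2*n)) • Ψ).PosSemidef := hΨ.smul (by positivity)
  calc min (lambdaMin S) (β / (n + ρ) * lambdaMin Ψ)
      ≤ (1 - η * (w + ρ/n) / 2) * lambdaMin S + η * (β/(2*n) * lambdaMin Ψ) :=
        min_le_sgd_step (lambdaMin_nonneg hS.posSemidef) (lambdaMin_nonneg hΨ) hw0 hw1 hη0.le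
          hη1 hn hβ.le hρ.le hρn
    _ ≤ (1 - η * (w + ρ/n) / 2) * lambdaMin S
          + η * lambdaMin ((w/2) • vecMulVec y y + (β/(2*n)) • Ψ) := by
        gcongr
        exact (mul_lambdaMin_le_lambdaMin_smul hΨ.1 (by positivity)).trans
          (lambdaMin_le_lambdaMin_add_of_posSemidef hyy hΨ'.1)
    _ ≤ _ := mul_lambdaMin_add_mul_lambdaMin_le hS.1 (hyy.add hΨ').1
        (sgd_step_coeff_nonneg hw0 hw1 hη1 hn hρ.le hρn) hη0.le
end

section
/- Let S and Ψ be real symmetric m×m matrices with S positive definite and Ψ positive semidefinite, let y ∈ ℝ^m, and let w ∈ [0,1], η ∈ (0,1], and let n, ρ, β be reals with n > 0, β > 0 and 0 < ρ ≤ n. Define the updated matrix S' = (1 − η(w + ρ/n)/2) S + η ((w/2) y yᵀ + (β/(2n)) Ψ). Then λ_max(S') ≤ max( λ_max(S), (w n ‖y‖² + β λ_max(Ψ)) / (w n + ρ) ). (This is the single-step estimate showing that the largest eigenvalue of the covariance-type iterates of SGD for the penalized GMM likelihood stays bounded above, part of the proof that the SGD iterates remain in a compact set.) -/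
open scoped Classical
open Matrix

/-!
In the Loewner order `S ≤ λ_max(S) • 1`, `Ψ ≤ λ_max(Ψ) • 1`, and `y yᵀ ≤ ‖y‖² • 1` because a
positive semidefinite matrix lies below its trace. With `c = η (w + ρ/n) / 2 ∈ [0, 1]` and `B` the
second entry of the maximum, these bounds add up to `S' ≤ ((1 - c) λ_max(S) + c B) • 1`, and a
convex combination of two reals is at most their maximum.
-/

open scoped MatrixOrder

lemma Matrix.PosSemidef.le_algebraMap_trace {n : Type*} [Fintype n] [DecidableEq n]
    {A : Matrix n n ℝ} (hA : A.PosSemidef) : A ≤ algebraMap ℝ _ A.trace := by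
  refine le_algebraMap_of_spectrum_le (fun x hx ↦ ?_) hA.isHermitian.isSelfAdjoint
  obtain ⟨i, rfl⟩ := hA.isHermitian.spectrum_real_eq_range_eigenvalues ▸ hx
  rw [hA.isHermitian.trace_eq_sum_eigenvalues]
  exact Finset.single_le_sum (fun j _ ↦ hA.eigenvalues_nonneg j) (Finset.mem_univ i)

lemma Matrix.vecMulVec_self_le_algebraMap {n : Type*} [Fintype n] [DecidableEq n] (y : n → ℝ) :
    vecMulVec y y ≤ algebraMap ℝ _ (y ⬝ᵥ y) := by
  simpa [trace_vecMulVec] using (posSemidef_vecMulVec_self_star y).le_algebraMap_trace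

variable {m : ℕ}

lemma lambdaMax_of_isEmpty [IsEmpty (Fin m)] (A : Matrix (Fin m) (Fin m) ℝ) :
    lambdaMax A = 0 := by
  unfold lambdaMax
  split_ifs <;> simp

lemma Matrix.IsHermitian.eigenvalues_le_lambdaMax {A : Matrix (Fin m) (Fin m) ℝ}
    (hA : A.IsHermitian) (i : Fin m) : hA.eigenvalues i ≤ lambdaMax A := by
  rw [lambdaMax, dif_pos hA]
  exact le_ciSup (Set.finite_range _).bddAbove i

lemma Matrix.IsHermitian.le_algebraMap_lambdaMax {A : Matrix (Fin m) (Fin m) ℝ}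
    (hA : A.IsHermitian) : A ≤ algebraMap ℝ _ (lambdaMax A) := by
  refine le_algebraMap_of_spectrum_le (fun x hx ↦ ?_) hA.isSelfAdjoint
  obtain ⟨i, rfl⟩ := hA.spectrum_real_eq_range_eigenvalues ▸ hx
  exact hA.eigenvalues_le_lambdaMax i

lemma lambdaMax_le_of_le_algebraMap [Nonempty (Fin m)] {A : Matrix (Fin m) (Fin m) ℝ} {c : ℝ}
    (h : A ≤ algebraMap ℝ _ c) : lambdaMax A ≤ c := by
  have hA : A.IsHermitian := by
    have := (IsSelfAdjoint.algebraMap _ (.all c)).sub (IsSelfAdjoint.of_nonneg (sub_nonneg.2 h))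
    rwa [sub_sub_cancel] at this
  rw [lambdaMax, dif_pos hA]
  exact ciSup_le fun i ↦
    (le_algebraMap_iff_spectrum_le hA.isSelfAdjoint).1 h _ (hA.eigenvalues_mem_spectrum_real i)

lemma smul_add_smul_vecMulVec_add_smul_le_algebraMap {S Ψ : Matrix (Fin m) (Fin m) ℝ}
    (hS : S.IsHermitian) (hΨ : Ψ.IsHermitian) (y : Fin m → ℝ) {a η b d : ℝ} (ha : 0 ≤ a)
    (hη : 0 ≤ η) (hb : 0 ≤ b) (hd : 0 ≤ d) :
    a • S + η • (b • vecMulVec y y + d • Ψ)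
      ≤ algebraMap ℝ _ (a * lambdaMax S + η * (b * (y ⬝ᵥ y) + d * lambdaMax Ψ)) := by
  calc _ ≤ a • algebraMap ℝ _ (lambdaMax S)
        + η • (b • algebraMap ℝ _ (y ⬝ᵥ y) + d • algebraMap ℝ _ (lambdaMax Ψ)) := by
        gcongr
        exacts [hS.le_algebraMap_lambdaMax, vecMulVec_self_le_algebraMap y,
          hΨ.le_algebraMap_lambdaMax]
    _ = _ := by simp only [Algebra.smul_def, ← map_mul, ← map_add]

/-- single-step upper bound on the largest eigenvalue of the SGD update
`S' = (1 - η(w + ρ/n)/2) S + η ((w/2) y yᵀ + (β/(2n)) Ψ)` for the penalized GMM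
likelihood; `y ⬝ᵥ y = ‖y‖²` is the squared Euclidean norm. -/
theorem sgd_gmm_lambdaMax_bound {m : ℕ}
    (S Ψ : Matrix (Fin m) (Fin m) ℝ) (hS : S.PosDef) (hΨ : Ψ.PosSemidef)
    (y : Fin m → ℝ) (w η n ρ β : ℝ)
    (hw : w ∈ Set.Icc (0:ℝ) 1) (hη : η ∈ Set.Ioc (0:ℝ) 1)
    (hn : 0 < n) (hβ : 0 < β) (hρ : 0 < ρ) (hρn : ρ ≤ n) :
    lambdaMax ((1 - η * (w + ρ/n) / 2) • S
        + η • ((w/2) • Matrix.vecMulVec y y + (β/(2*n)) • Ψ))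
      ≤ max (lambdaMax S) ((w * n * (y ⬝ᵥ y) + β * lambdaMax Ψ) / (w * n + ρ)) := by
  obtain ⟨hw0, hw1⟩ := hw
  obtain ⟨hη0, hη1⟩ := hη
  rcases isEmpty_or_nonempty (Fin m) with _ | _
  · simp [lambdaMax_of_isEmpty]
  set c := η * (w + ρ / n) / 2 with hc
  set B := (w * n * (y ⬝ᵥ y) + β * lambdaMax Ψ) / (w * n + ρ) with hB
  have hc1 : c ≤ 1 := by
    have : η * (w + ρ / n) ≤ 1 * 2 := by
      gcongr
      linarith [(div_le_one hn).2 hρn]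
    linarith
  have hcB : η * (w / 2 * (y ⬝ᵥ y) + β / (2 * n) * lambdaMax Ψ) = c * B := by
    rw [hc, hB]
    field_simp
  calc _ ≤ (1 - c) * lambdaMax S + c * B := by
        rw [← hcB]
        exact lambdaMax_le_of_le_algebraMap <| smul_add_smul_vecMulVec_add_smul_le_algebraMap
          hS.isHermitian hΨ.isHermitian y (by linarith) hη0.le (by positivity) (by positivity)
    _ ≤ max (lambdaMax S) B := by
      simpa using Convex.combo_le_max (lambdaMax S) B (sub_nonneg.2 hc1) (by positivity) (by ring)
end
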